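/- Let γ : ℝ → ℂ be a continuously differentiable 2π-periodic function and φ̂ : ℝ → 𝔹 a continuous 2π-periodic function. Then the biharmonic Cauchy type integral Ψ(x, y) := (1/(2πi))·∫₀^{2π} φ̂(θ)·(γ̃(θ) − (x·e₁ + y·e₂))⁻¹·γ̃'(θ) dθ is well defined on the open set G := {(x, y) ∈ ℝ² : x + iy ∉ γ(ℝ)} (all the inverses exist in 𝔹), is infinitely differentiable on G, and satisfies the Cauchy–Riemann analogue ∂Ψ/∂y = (∂Ψ/∂x)·e₂ on G; that is, the biharmonic Cauchy type integral is a monogenic function off the curve, in particular in both the interior and exterior regions determined by the curve. -/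

import Mathlib

open MeasureTheory Filter Topology Set

/-- The biharmonic algebra `𝔹`, realized as the dual numbers over `ℂ`. -/
noncomputable abbrev 𝔹 : Type := DualNumber ℂ

/-- The basis element `e₁ = 1` of the biharmonic algebra. -/
noncomputable def e₁ : 𝔹 := 1

/-- The basis element `e₂ = i + ε` of the biharmonic algebra. -/
noncomputable def e₂ : 𝔹 := Complex.I • 1 + DualNumber.eps

/-- The embedding `γ̃` of a plane curve `γ` into the biharmonic plane. -/
noncomputable def tilde (γ : ℝ → ℂ) (θ : ℝ) : 𝔹 :=
  (((γ θ).re : ℂ)) • e₁ + (((γ θ).im : ℂ)) • e₂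

/-- Partial derivative in the `x`-direction. -/
noncomputable def pdx {E : Type*} [NormedAddCommGroup E] [NormedSpace ℝ E]
    (f : ℝ × ℝ → E) (p : ℝ × ℝ) : E := fderiv ℝ f p (1, 0)

/-- Partial derivative in the `y`-direction. -/
noncomputable def pdy {E : Type*} [NormedAddCommGroup E] [NormedSpace ℝ E]
    (f : ℝ × ℝ → E) (p : ℝ × ℝ) : E := fderiv ℝ f p (0, 1)

/-! ### Auxiliary material -/

namespace CTI

open TrivSqZeroExt Metric intervalIntegral

@[simp] lemma fst_e₁ : (e₁ : 𝔹).fst = 1 := rfl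
@[simp] lemma snd_e₁ : (e₁ : 𝔹).snd = 0 := rfl
@[simp] lemma fst_e₂ : (e₂ : 𝔹).fst = Complex.I := by
  rw [e₂, fst_add, fst_smul, fst_one, DualNumber.eps, fst_inr, smul_eq_mul, mul_one, add_zero]
@[simp] lemma snd_e₂ : (e₂ : 𝔹).snd = 1 := by
  rw [e₂, snd_add, snd_smul, snd_one, DualNumber.eps, snd_inr, smul_zero, zero_add]

@[simp] lemma fst_tilde (γ : ℝ → ℂ) (θ : ℝ) : (tilde γ θ).fst = γ θ := by
  rw [tilde, fst_add, fst_smul, fst_smul, fst_e₁, fst_e₂, smul_eq_mul, smul_eq_mul, mul_one,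
    Complex.re_add_im]

@[simp] lemma snd_tilde (γ : ℝ → ℂ) (θ : ℝ) : (tilde γ θ).snd = ((γ θ).im : ℂ) := by
  rw [tilde, snd_add, snd_smul, snd_smul, snd_e₁, snd_e₂, smul_zero, smul_eq_mul, mul_one,
    zero_add]

/-- The complex point attached to a planar point. -/
noncomputable def zm (p : ℝ × ℝ) : ℂ := (p.1 : ℂ) + Complex.I * p.2

/-- The 𝔹 point attached to a planar point. -/
noncomputable def wm (p : ℝ × ℝ) : 𝔹 := (p.1 : ℂ) • e₁ + (p.2 : ℂ) • e₂

@[simp] lemma fst_wm (p : ℝ × ℝ) : (wm p).fst = zm p := by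
  rw [wm, fst_add, fst_smul, fst_smul, fst_e₁, fst_e₂, smul_eq_mul, smul_eq_mul, zm]; ring

@[simp] lemma snd_wm (p : ℝ × ℝ) : (wm p).snd = (p.2 : ℂ) := by
  rw [wm, snd_add, snd_smul, snd_smul, snd_e₁, snd_e₂, smul_zero, smul_eq_mul, mul_one, zero_add]

/-- Explicit formula for the `Ring.inverse` of a unit in `𝔹`. -/
lemma ring_inverse_eq (x : 𝔹) (hx : x.fst ≠ 0) :
    Ring.inverse x = inl x.fst⁻¹ - inr (x.fst⁻¹ * x.fst⁻¹ * x.snd) := by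
  set v : 𝔹 := inl x.fst⁻¹ - inr (x.fst⁻¹ * x.fst⁻¹ * x.snd) with hv
  have h1 : x * v = 1 := by
    ext
    · rw [fst_mul, hv, fst_sub, fst_inl, fst_inr, sub_zero, mul_inv_cancel₀ hx, fst_one]
    · rw [snd_mul, hv, snd_sub, snd_inl, snd_inr, fst_sub, fst_inl, fst_inr, snd_one]
      simp only [op_smul_eq_smul, smul_eq_mul, zero_sub, sub_zero, mul_neg]
      field_simp
      ring
  have hu : IsUnit x := isUnit_iff_isUnit_fst.mpr (isUnit_iff_ne_zero.mpr hx)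
  calc Ring.inverse x = Ring.inverse x * (x * v) := by rw [h1, mul_one]
    _ = (Ring.inverse x * x) * v := by rw [mul_assoc]
    _ = v := by rw [Ring.inverse_mul_cancel x hu, one_mul]

/-- The basic parametric Cauchy-type integral. -/
noncomputable def cint (γ ψ : ℝ → ℂ) (n : ℕ) (z : ℂ) : ℂ :=
  ∫ θ in (0:ℝ)..(2*Real.pi), ψ θ * ((γ θ - z)⁻¹) ^ n

set_option maxHeartbeats 1000000 in
lemma cint_hasDerivAt (γ ψ : ℝ → ℂ) (hγ : Continuous γ) (hψ : Continuous ψ)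
    (hcl : IsClosed (range γ)) (n : ℕ) (hn : 1 ≤ n) (z₀ : ℂ) (hz : z₀ ∉ range γ) :
    HasDerivAt (cint γ ψ n) ((n : ℂ) * cint γ ψ (n+1) z₀) z₀ := by
  have hne : (range γ).Nonempty := range_nonempty γ
  set ε := infDist z₀ (range γ) with hε
  have hε0 : 0 < ε := (hcl.notMem_iff_infDist_pos hne).mp hz
  -- points of the ball are far from the curve
  have hfar : ∀ x ∈ ball z₀ (ε/2), ∀ θ : ℝ, ε/2 ≤ ‖γ θ - x‖ := by
    intro x hx θ
    have h1 : ε ≤ dist z₀ (γ θ) := infDist_le_dist_of_mem (mem_range_self θ)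
    have h2 : dist z₀ x < ε/2 := by rw [dist_comm]; exact mem_ball.mp hx
    have h3 : dist z₀ (γ θ) ≤ dist z₀ x + dist x (γ θ) := dist_triangle _ _ _
    have h4 : ‖γ θ - x‖ = dist x (γ θ) := by rw [dist_eq_norm, norm_sub_rev]
    linarith
  have hball : ∀ x ∈ ball z₀ (ε/2), ∀ θ : ℝ, γ θ - x ≠ 0 := by
    intro x hx θ
    have := hfar x hx θ
    intro h
    rw [h, norm_zero] at this
    linarith
  have hz₀ : z₀ ∈ ball z₀ (ε/2) := mem_ball_self (by linarith)
  have hinv_le : ∀ x ∈ ball z₀ (ε/2), ∀ θ : ℝ, ‖(γ θ - x)⁻¹‖ ≤ 2/ε := by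
    intro x hx θ
    rw [norm_inv]
    calc ‖γ θ - x‖⁻¹ ≤ (ε/2)⁻¹ := by
          apply inv_anti₀ (by linarith) (hfar x hx θ)
      _ = 2/ε := by rw [inv_div]
  -- the key derivative pointwise
  have hdiff : ∀ (θ : ℝ), ∀ x ∈ ball z₀ (ε/2),
      HasDerivAt (fun z => ψ θ * ((γ θ - z)⁻¹) ^ n)
        ((n : ℂ) * ψ θ * ((γ θ - x)⁻¹) ^ (n+1)) x := by
    intro θ x hx
    have h0 : γ θ - x ≠ 0 := hball x hx θ
    have h1 : HasDerivAt (fun z : ℂ => γ θ - z) (-1) x := by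
      simpa using (hasDerivAt_id x).const_sub (γ θ)
    have h2 := h1.inv h0
    have h3 := h2.pow n
    have h4 := h3.const_mul (ψ θ)
    refine h4.congr_deriv ?_
    simp only [Pi.inv_apply]
    have hpow : ((γ θ - x)⁻¹) ^ (n + 1) = ((γ θ - x)⁻¹) ^ (n - 1) * ((γ θ - x)⁻¹) ^ 2 := by
      rw [← pow_add]
      congr 1
      omega
    rw [hpow]
    field_simp
  -- continuity of integrands
  have hcont : ∀ x ∈ ball z₀ (ε/2), ∀ m : ℕ, Continuous (fun θ => ψ θ * ((γ θ - x)⁻¹) ^ m) := by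
    intro x hx m
    exact hψ.mul (((hγ.sub continuous_const).inv₀ (fun θ => hball x hx θ)).pow m)
  have hmeas : ∀ᶠ x in nhds z₀, AEStronglyMeasurable (fun θ => ψ θ * ((γ θ - x)⁻¹) ^ n)
      (volume.restrict (Set.uIoc (0:ℝ) (2*Real.pi))) :=
    Filter.eventually_of_mem (ball_mem_nhds z₀ (half_pos hε0))
      (fun x hx => (hcont x hx n).aestronglyMeasurable)
  have hint : IntervalIntegrable (fun θ => ψ θ * ((γ θ - z₀)⁻¹) ^ n) volume 0 (2*Real.pi) :=
    (hcont z₀ hz₀ n).intervalIntegrable _ _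
  have hmeas' : AEStronglyMeasurable (fun θ => (n : ℂ) * ψ θ * ((γ θ - z₀)⁻¹) ^ (n+1))
      (volume.restrict (Set.uIoc (0:ℝ) (2*Real.pi))) :=
    ((continuous_const.mul hψ).mul
      (((hγ.sub continuous_const).inv₀ (fun θ => hball z₀ hz₀ θ)).pow (n+1))).aestronglyMeasurable
  have hbound : ∀ᵐ θ ∂(volume : Measure ℝ), θ ∈ Set.uIoc (0:ℝ) (2*Real.pi) →
      ∀ x ∈ ball z₀ (ε/2), ‖(n : ℂ) * ψ θ * ((γ θ - x)⁻¹) ^ (n+1)‖ ≤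
        (n : ℝ) * ‖ψ θ‖ * (2/ε) ^ (n+1) := by
    refine ae_of_all _ (fun θ _ x hx => ?_)
    have e1 : ‖(n : ℂ) * ψ θ * ((γ θ - x)⁻¹) ^ (n+1)‖
        = (n : ℝ) * ‖ψ θ‖ * ‖(γ θ - x)⁻¹‖ ^ (n+1) := by
      rw [norm_mul, norm_mul, norm_pow, Complex.norm_natCast]
    rw [e1]
    gcongr <;> first
      | exact norm_nonneg _
      | exact hinv_le x hx θ
  have hbint : IntervalIntegrable (fun θ => (n : ℝ) * ‖ψ θ‖ * (2/ε) ^ (n+1)) volume 0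
      (2*Real.pi) :=
    ((continuous_const.mul hψ.norm).mul continuous_const).intervalIntegrable _ _
  obtain ⟨-, key⟩ := intervalIntegral.hasDerivAt_integral_of_dominated_loc_of_deriv_le
    (𝕜 := ℂ) (μ := volume) (F := fun z θ => ψ θ * ((γ θ - z)⁻¹) ^ n)
    (F' := fun z θ => (n : ℂ) * ψ θ * ((γ θ - z)⁻¹) ^ (n+1))
    (bound := fun θ => (n : ℝ) * ‖ψ θ‖ * (2/ε) ^ (n+1))
    (a := 0) (b := 2*Real.pi) (x₀ := z₀)
    (ball_mem_nhds z₀ (half_pos hε0)) hmeas hint hmeas' hbound hbint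
    (ae_of_all _ (fun θ _ x hx => hdiff θ x hx))
  unfold cint
  rw [← intervalIntegral.integral_const_mul]
  simp_rw [← mul_assoc]
  exact key


/-- Componentwise computation of a `𝔹`-valued interval integral. -/
lemma integral_inl_add_inr (f₁ f₂ : ℝ → ℂ) (a b : ℝ)
    (h₁ : Continuous f₁) (h₂ : Continuous f₂) :
    (∫ θ in a..b, (inl (f₁ θ) + inr (f₂ θ) : 𝔹))
      = inl (∫ θ in a..b, f₁ θ) + inr (∫ θ in a..b, f₂ θ) := by
  rw [intervalIntegral.integral_add
        ((TrivSqZeroExt.continuous_inl.comp h₁).intervalIntegrable _ _)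
        ((TrivSqZeroExt.continuous_inr.comp h₂).intervalIntegrable _ _)]
  congr 1
  · have := (inlCLM ℂ ℂ).intervalIntegral_comp_comm
      (h₁.intervalIntegrable (μ := volume) a b)
    simpa using this
  · have := (inrCLM ℂ ℂ).intervalIntegral_comp_comm
      (h₂.intervalIntegrable (μ := volume) a b)
    simpa using this

/-- The planar-to-complex continuous linear map. -/
noncomputable def zCLM : ℝ × ℝ →L[ℝ] ℂ :=
  Complex.ofRealCLM.comp (ContinuousLinearMap.fst ℝ ℝ ℝ) +
    (Complex.I • Complex.ofRealCLM).comp (ContinuousLinearMap.snd ℝ ℝ ℝ)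

@[simp] lemma zCLM_apply (v : ℝ × ℝ) : zCLM v = (v.1 : ℂ) + Complex.I * (v.2 : ℂ) := by
  simp [zCLM, smul_eq_mul]

lemma zm_eq_zCLM : zm = fun q : ℝ × ℝ => zCLM q := by
  funext q
  rw [zCLM_apply, zm]

lemma hasFDerivAt_zm (p : ℝ × ℝ) : HasFDerivAt zm zCLM p := by
  rw [zm_eq_zCLM]
  exact zCLM.hasFDerivAt

/-- The planar-to-complex second coordinate map. -/
noncomputable def yCLM : ℝ × ℝ →L[ℝ] ℂ :=
  Complex.ofRealCLM.comp (ContinuousLinearMap.snd ℝ ℝ ℝ)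

@[simp] lemma yCLM_apply (v : ℝ × ℝ) : yCLM v = (v.2 : ℂ) := rfl

lemma hasFDerivAt_ym (p : ℝ × ℝ) : HasFDerivAt (fun q : ℝ × ℝ => (q.2 : ℂ)) yCLM p :=
  yCLM.hasFDerivAt

end CTI

open CTI TrivSqZeroExt

/-- The biharmonic Cauchy type integral is well defined off the curve (all the inverses
exist in `𝔹`), is infinitely differentiable there, and satisfies the Cauchy–Riemann
analogue `∂Ψ/∂y = (∂Ψ/∂x)·e₂`; i.e. it is a monogenic function off the curve. -/
theorem cauchy_type_integral_monogenic
    (γ : ℝ → ℂ) (hγC1 : ContDiff ℝ 1 γ) (hγper : Function.Periodic γ (2 * Real.pi))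
    (φ : ℝ → 𝔹) (hφc : Continuous φ) (hφper : Function.Periodic φ (2 * Real.pi))
    (G : Set (ℝ × ℝ)) (hG : G = {p : ℝ × ℝ | (p.1 : ℂ) + Complex.I * (p.2 : ℂ) ∉ range γ})
    (Ψ : ℝ × ℝ → 𝔹)
    (hΨ : ∀ p : ℝ × ℝ, Ψ p = ((1 : ℂ) / (2 * Real.pi * Complex.I)) •
      ∫ θ in (0 : ℝ)..(2 * Real.pi),
        φ θ * Ring.inverse (tilde γ θ - ((p.1 : ℂ) • e₁ + (p.2 : ℂ) • e₂)) * tilde (deriv γ) θ) :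
    IsOpen G ∧
    (∀ p ∈ G, ∀ θ : ℝ, IsUnit (tilde γ θ - ((p.1 : ℂ) • e₁ + (p.2 : ℂ) • e₂))) ∧
    ContDiffOn ℝ (⊤ : ℕ∞) Ψ G ∧
    (∀ p ∈ G, pdy Ψ p = pdx Ψ p * e₂) := by
  classical
  have hγc : Continuous γ := hγC1.continuous
  have hgc : Continuous (deriv γ) := hγC1.continuous_deriv le_rfl
  set g : ℝ → ℂ := deriv γ with hgdef
  have hcl : IsClosed (range γ) := by
    rw [← hγper.image_Icc Real.two_pi_pos 0]
    exact (isCompact_Icc.image hγc).isClosed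
  -- membership in `G` in terms of `zm`
  have hGmem : ∀ p : ℝ × ℝ, p ∈ G ↔ zm p ∉ range γ := by
    intro p
    rw [hG]
    exact Iff.rfl
  have hwm : ∀ p : ℝ × ℝ, ((p.1 : ℂ) • e₁ + (p.2 : ℂ) • e₂) = wm p := fun p => rfl
  have hzmc : Continuous zm := by
    rw [zm_eq_zCLM]
    exact zCLM.continuous
  -- openness of `G`
  have hopen : IsOpen G := by
    have : G = zm ⁻¹' (range γ)ᶜ := by
      ext p
      exact hGmem p
    rw [this]
    exact hcl.isOpen_compl.preimage hzmc
  -- nonvanishing denominators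
  have hA0 : ∀ p ∈ G, ∀ θ : ℝ, γ θ - zm p ≠ 0 := by
    intro p hp θ
    exact sub_ne_zero.mpr (fun h => (hGmem p).mp hp (h ▸ mem_range_self θ))
  have hfst : ∀ (p : ℝ × ℝ) (θ : ℝ), (tilde γ θ - wm p).fst = γ θ - zm p := by
    intro p θ
    rw [fst_sub, fst_tilde, fst_wm]
  have hsnd : ∀ (p : ℝ × ℝ) (θ : ℝ), (tilde γ θ - wm p).snd = ((γ θ).im : ℂ) - (p.2 : ℂ) := by
    intro p θ
    rw [snd_sub, snd_tilde, snd_wm]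
  -- units
  have hunit : ∀ p ∈ G, ∀ θ : ℝ, IsUnit (tilde γ θ - ((p.1 : ℂ) • e₁ + (p.2 : ℂ) • e₂)) := by
    intro p hp θ
    rw [hwm p, isUnit_iff_isUnit_fst, hfst p θ, isUnit_iff_ne_zero]
    exact hA0 p hp θ
  -- the component densities
  set φ₁ : ℝ → ℂ := fun θ => (φ θ).fst with hφ₁def
  set φ₂ : ℝ → ℂ := fun θ => (φ θ).snd with hφ₂def
  have hφ₁c : Continuous φ₁ := TrivSqZeroExt.continuous_fst.comp hφc
  have hφ₂c : Continuous φ₂ := TrivSqZeroExt.continuous_snd.comp hφc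
  set ψa : ℝ → ℂ := fun θ => φ₁ θ * g θ with hψadef
  set ψb : ℝ → ℂ := fun θ => φ₂ θ * g θ + φ₁ θ * ((g θ).im : ℂ) with hψbdef
  set ψc : ℝ → ℂ := fun θ => -(φ₁ θ * ((γ θ).im : ℂ) * g θ) with hψcdef
  have hψac : Continuous ψa := hφ₁c.mul hgc
  have hψbc : Continuous ψb := (hφ₂c.mul hgc).add
    (hφ₁c.mul (Complex.continuous_ofReal.comp (Complex.continuous_im.comp hgc)))
  have hψcc : Continuous ψc := ((hφ₁c.mul
    (Complex.continuous_ofReal.comp (Complex.continuous_im.comp hγc))).mul hgc).neg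
  set c : ℂ := (1 : ℂ) / (2 * Real.pi * Complex.I) with hcdef
  -- the model function
  set A : ℝ × ℝ → ℂ := fun p => cint γ ψa 1 (zm p) with hAdef
  set B : ℝ × ℝ → ℂ := fun p =>
    cint γ ψb 1 (zm p) + cint γ ψc 2 (zm p) + (p.2 : ℂ) * cint γ ψa 2 (zm p) with hBdef
  set S : ℝ × ℝ → 𝔹 := fun p => c • ((inl (A p) + inr (B p)) : 𝔹) with hSdef
  -- `Ψ` agrees with the model function on `G`
  have hSΨ : ∀ p ∈ G, Ψ p = S p := by
    intro p hp
    rw [hΨ p]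
    have hintegrand : ∀ θ : ℝ,
        φ θ * Ring.inverse (tilde γ θ - ((p.1 : ℂ) • e₁ + (p.2 : ℂ) • e₂)) * tilde g θ
          = inl (ψa θ * ((γ θ - zm p)⁻¹) ^ 1) +
            inr (ψb θ * ((γ θ - zm p)⁻¹) ^ 1 + ψc θ * ((γ θ - zm p)⁻¹) ^ 2 +
              (p.2 : ℂ) * (ψa θ * ((γ θ - zm p)⁻¹) ^ 2)) := by
      intro θ
      rw [hwm p, ring_inverse_eq _ (by rw [hfst p θ]; exact hA0 p hp θ), hfst p θ, hsnd p θ]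
      ext
      · simp only [fst_mul, fst_sub, fst_add, fst_inl, fst_inr, snd_inl, snd_inr,
          fst_tilde, snd_tilde, sub_zero, pow_one, pow_two, hψadef, hφ₁def]
        ring
      · simp only [snd_mul, fst_mul, fst_sub, snd_sub, fst_add, snd_add, fst_inl, fst_inr,
          snd_inl, snd_inr, fst_tilde, snd_tilde, op_smul_eq_smul, smul_eq_mul, sub_zero,
          pow_one, pow_two, hψadef, hψbdef, hψcdef, hφ₁def, hφ₂def, zero_sub, sub_zero,
          mul_neg, neg_mul, mul_zero, zero_mul, add_zero, zero_add]
        ring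
    rw [intervalIntegral.integral_congr (fun θ _ => hintegrand θ)]
    have hbase : Continuous fun θ => (γ θ - zm p)⁻¹ := (hγc.sub (continuous_const : Continuous fun _ : ℝ => zm p)).inv₀ (hA0 p hp)
    have hcont1 : Continuous fun θ => ψa θ * ((γ θ - zm p)⁻¹) ^ 1 := hψac.mul (hbase.pow 1)
    have hcont2 : Continuous fun θ =>
        ψb θ * ((γ θ - zm p)⁻¹) ^ 1 + ψc θ * ((γ θ - zm p)⁻¹) ^ 2 +
          (p.2 : ℂ) * (ψa θ * ((γ θ - zm p)⁻¹) ^ 2) :=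
      ((hψbc.mul (hbase.pow 1)).add (hψcc.mul (hbase.pow 2))).add
        (continuous_const.mul (hψac.mul (hbase.pow 2)))
    rw [integral_inl_add_inr _ _ _ _ hcont1 hcont2]
    have hBint : (∫ θ in (0:ℝ)..(2*Real.pi),
        ψb θ * ((γ θ - zm p)⁻¹) ^ 1 + ψc θ * ((γ θ - zm p)⁻¹) ^ 2 +
          (p.2 : ℂ) * (ψa θ * ((γ θ - zm p)⁻¹) ^ 2)) = B p := by
      rw [intervalIntegral.integral_add
          (f := fun θ => ψb θ * ((γ θ - zm p)⁻¹) ^ 1 + ψc θ * ((γ θ - zm p)⁻¹) ^ 2)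
          (g := fun θ => (p.2 : ℂ) * (ψa θ * ((γ θ - zm p)⁻¹) ^ 2))
          (((hψbc.mul (hbase.pow 1)).add (hψcc.mul (hbase.pow 2))).intervalIntegrable _ _)
          ((continuous_const.mul (hψac.mul (hbase.pow 2))).intervalIntegrable _ _),
        intervalIntegral.integral_add (f := fun θ => ψb θ * ((γ θ - zm p)⁻¹) ^ 1)
          (g := fun θ => ψc θ * ((γ θ - zm p)⁻¹) ^ 2) ((hψbc.mul (hbase.pow 1)).intervalIntegrable _ _)
          ((hψcc.mul (hbase.pow 2)).intervalIntegrable _ _),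
        intervalIntegral.integral_const_mul]
      simp only [hBdef, cint]
    rw [hBint]
    have hAint : (∫ θ in (0:ℝ)..(2*Real.pi), ψa θ * ((γ θ - zm p)⁻¹) ^ 1) = A p := by
      simp only [hAdef, cint]
    rw [hAint, hSdef]
  -- complex differentiability of the building blocks
  have hdiffOn : ∀ ψ : ℝ → ℂ, Continuous ψ → ∀ n : ℕ, 1 ≤ n →
      ContDiffOn ℂ ⊤ (cint γ ψ n) (range γ)ᶜ := by
    intro ψ hψ n hn
    refine DifferentiableOn.contDiffOn (fun z hz => ?_) hcl.isOpen_compl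
    exact ((cint_hasDerivAt γ ψ hγc hψ hcl n hn z hz).differentiableAt).differentiableWithinAt
  have hmaps : Set.MapsTo zm G (range γ)ᶜ := fun p hp => (hGmem p).mp hp
  have hzsm : ContDiff ℝ (⊤ : ℕ∞) zm := by
    rw [zm_eq_zCLM]
    exact zCLM.contDiff
  have hcintG : ∀ ψ : ℝ → ℂ, Continuous ψ → ∀ n : ℕ, 1 ≤ n →
      ContDiffOn ℝ (⊤ : ℕ∞) (fun p => cint γ ψ n (zm p)) G := by
    intro ψ hψ n hn
    exact (((hdiffOn ψ hψ n hn).restrict_scalars ℝ).of_le le_top).comp hzsm.contDiffOn hmaps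
  have hAsm : ContDiffOn ℝ (⊤ : ℕ∞) A G := hcintG ψa hψac 1 le_rfl
  have hysm : ContDiff ℝ (⊤ : ℕ∞) (fun p : ℝ × ℝ => (p.2 : ℂ)) :=
    Complex.ofRealCLM.contDiff.comp contDiff_snd
  have hBsm : ContDiffOn ℝ (⊤ : ℕ∞) B G :=
    ((hcintG ψb hψbc 1 le_rfl).add (hcintG ψc hψcc 2 (by norm_num))).add
      (hysm.contDiffOn.mul (hcintG ψa hψac 2 (by norm_num)))
  have hSsm : ContDiffOn ℝ (⊤ : ℕ∞) S G := by
    have h2 := (((inlCLM ℂ ℂ).restrictScalars ℝ).contDiff (n := (⊤ : ℕ∞))).comp_contDiffOn hAsm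
    have h3 := (((inrCLM ℂ ℂ).restrictScalars ℝ).contDiff (n := (⊤ : ℕ∞))).comp_contDiffOn hBsm
    exact (h2.add h3).const_smul c
  have hΨsm : ContDiffOn ℝ (⊤ : ℕ∞) Ψ G := hSsm.congr hSΨ
  refine ⟨hopen, hunit, hΨsm, ?_⟩
  -- monogenicity
  intro p hp
  have hz₀ : zm p ∉ range γ := (hGmem p).mp hp
  have hda := cint_hasDerivAt γ ψa hγc hψac hcl 1 le_rfl (zm p) hz₀
  have hdb := cint_hasDerivAt γ ψb hγc hψbc hcl 1 le_rfl (zm p) hz₀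
  have hdc := cint_hasDerivAt γ ψc hγc hψcc hcl 2 (by norm_num) (zm p) hz₀
  have hda2 := cint_hasDerivAt γ ψa hγc hψac hcl 2 (by norm_num) (zm p) hz₀
  have hfz := hasFDerivAt_zm p
  have hy' : HasFDerivAt (fun q : ℝ × ℝ => (q.2 : ℂ)) yCLM p := hasFDerivAt_ym p
  have hS' : HasFDerivAt S
      (c • (((inlCLM ℂ ℂ).restrictScalars ℝ).comp
          ((((1:ℕ):ℂ) * cint γ ψa (1+1) (zm p)) • zCLM) +
        ((inrCLM ℂ ℂ).restrictScalars ℝ).comp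
          (((((1:ℕ):ℂ) * cint γ ψb (1+1) (zm p)) • zCLM +
            (((2:ℕ):ℂ) * cint γ ψc (2+1) (zm p)) • zCLM) +
            ((p.2 : ℂ) • ((((2:ℕ):ℂ) * cint γ ψa (2+1) (zm p)) • zCLM) +
              yCLM.smulRight (cint γ ψa 2 (zm p)))))) p := by
    exact ((((inlCLM ℂ ℂ).restrictScalars ℝ).hasFDerivAt.comp p
        (hda.comp_hasFDerivAt p hfz)).add
      (((inrCLM ℂ ℂ).restrictScalars ℝ).hasFDerivAt.comp p
        (((hdb.comp_hasFDerivAt p hfz).add (hdc.comp_hasFDerivAt p hfz)).add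
          (hy'.mul' (hda2.comp_hasFDerivAt p hfz))))).const_smul c
  have hev : Ψ =ᶠ[nhds p] S := Filter.eventuallyEq_of_mem (hopen.mem_nhds hp) hSΨ
  have hfd : fderiv ℝ Ψ p = fderiv ℝ S p := hev.fderiv_eq
  rw [pdy, pdx, hfd, hS'.fderiv]
  simp only [ContinuousLinearMap.add_apply, ContinuousLinearMap.smul_apply,
    ContinuousLinearMap.coe_comp', Function.comp_apply,
    ContinuousLinearMap.coe_restrictScalars', ContinuousLinearMap.smulRight_apply,
    inlCLM_apply, inrCLM_apply, zCLM_apply, yCLM_apply, Complex.ofReal_one,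
    Complex.ofReal_zero, Nat.cast_one, Nat.cast_ofNat, one_mul, mul_one, mul_zero,
    zero_mul, add_zero, zero_add, smul_eq_mul]
  norm_num
  ext
  · simp only [fst_mul, snd_mul, fst_add, snd_add, fst_smul, snd_smul, fst_inl, fst_inr,
      snd_inl, snd_inr, fst_e₂, snd_e₂, DualNumber.eps, op_smul_eq_smul, smul_eq_mul,
      add_zero, zero_add, mul_zero, zero_mul, mul_one, one_mul]
    ring
  · simp only [fst_mul, snd_mul, fst_add, snd_add, fst_smul, snd_smul, fst_inl, fst_inr,
      snd_inl, snd_inr, fst_e₂, snd_e₂, DualNumber.eps, op_smul_eq_smul, smul_eq_mul,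
      add_zero, zero_add, mul_zero, zero_mul, mul_one, one_mul]
    ring
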